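/- arXiv:1401.7428 — 3 statements merged into one kernel-verified Lean document; each statement's English description precedes it below -/
import Mathlib

section
/- Let X be a real Banach space and let f : X → (−∞, +∞] be proper, lower semicontinuous and convex with int(dom f) ≠ ∅. If the subdifferential operator ∂f is ultramaximally monotone, then X is reflexive (i.e., the canonical embedding of X into X** is surjective). -/
open Pointwise Set NormedSpace

variable {X : Type*} [NormedAddCommGroup X] [NormedSpace ℝ X]

/-- A set-valued operator `A : X ⇉ X*`, identified with its graph, is monotone. -/
def IsMonotoneOp (A : Set (X × StrongDual ℝ X)) : Prop :=
  ∀ p ∈ A, ∀ q ∈ A, 0 ≤ (p.2 - q.2) (p.1 - q.1)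

/-- `A` is maximally monotone: monotone and every monotonically related pair belongs to it. -/
def IsMaxMonotone (A : Set (X × StrongDual ℝ X)) : Prop :=
  IsMonotoneOp A ∧
    ∀ (x : X) (xs : StrongDual ℝ X), (∀ p ∈ A, 0 ≤ (xs - p.2) (x - p.1)) → (x, xs) ∈ A

/-- `A` is ultramaximally monotone: monotone, and maximally monotone with respect to
`X** × X*`. -/
def IsUltraMaxMonotone (A : Set (X × StrongDual ℝ X)) : Prop :=
  IsMonotoneOp A ∧
    ∀ (xss : StrongDual ℝ (StrongDual ℝ X)) (xs : StrongDual ℝ X),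
      (∀ p ∈ A, 0 ≤ (xss - inclusionInDoubleDual ℝ X p.1) (xs - p.2)) →
      ∃ x : X, xss = inclusionInDoubleDual ℝ X x ∧ (x, xs) ∈ A

/-- `A` is maximally monotone of type (NI): for every `(x**, x*)`,
`inf_{(a,a*) ∈ gra A} ⟨x* − a*, x** − â⟩ ≤ 0`. -/
def IsTypeNI (A : Set (X × StrongDual ℝ X)) : Prop :=
  IsMaxMonotone A ∧
    ∀ (xss : StrongDual ℝ (StrongDual ℝ X)) (xs : StrongDual ℝ X) (ε : ℝ), 0 < ε →
      ∃ p ∈ A, (xss - inclusionInDoubleDual ℝ X p.1) (xs - p.2) < ε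

def domOp (A : Set (X × StrongDual ℝ X)) : Set X := {x | ∃ xs, (x, xs) ∈ A}

def ranOp (A : Set (X × StrongDual ℝ X)) : Set (StrongDual ℝ X) := {xs | ∃ x, (x, xs) ∈ A}

/-- The sum `A + B`: `gra (A+B) = {(x, a* + b*) : (x,a*) ∈ gra A, (x,b*) ∈ gra B}`. -/
def sumOp (A B : Set (X × StrongDual ℝ X)) : Set (X × StrongDual ℝ X) :=
  {p | ∃ as bs, (p.1, as) ∈ A ∧ (p.1, bs) ∈ B ∧ p.2 = as + bs}

/-- The Fitzpatrick function `F_A(x, x*) = sup_{(a,a*) ∈ gra A} (⟨x,a*⟩ + ⟨a,x*⟩ − ⟨a,a*⟩)`. -/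
noncomputable def fitz (A : Set (X × StrongDual ℝ X)) : X × StrongDual ℝ X → EReal :=
  fun q => ⨆ p : A, ((p.1.2 q.1 + q.2 p.1.1 - p.1.2 p.1.1 : ℝ) : EReal)

/-- The extended Fitzpatrick function
`Φ_A(x**, x*) = sup_{(a,a*) ∈ gra A} (⟨a*,x**⟩ + ⟨a,x*⟩ − ⟨a,a*⟩)` on `X** × X*`. -/
noncomputable def phiFitz (A : Set (X × StrongDual ℝ X)) : StrongDual ℝ (StrongDual ℝ X) × StrongDual ℝ X → EReal :=
  fun q => ⨆ p : A, ((q.1 p.1.2 + q.2 p.1.1 - p.1.2 p.1.1 : ℝ) : EReal)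

/-- The Fenchel conjugate of the Fitzpatrick function,
`F_A*(x*, x**) = sup_{(y,y*)} (⟨y,x*⟩ + ⟨y*,x**⟩ − F_A(y,y*))`. -/
noncomputable def fitzConj (A : Set (X × StrongDual ℝ X)) :
    StrongDual ℝ X × StrongDual ℝ (StrongDual ℝ X) → EReal :=
  fun r => ⨆ q : X × StrongDual ℝ X, (((r.1 q.1 + r.2 q.2 : ℝ) : EReal) - fitz A q)


/-- `A` is maximally monotone of type (FPV). -/
def IsFPV (A : Set (X × StrongDual ℝ X)) : Prop :=
  IsMaxMonotone A ∧
    ∀ U : Set X, IsOpen U → Convex ℝ U → (U ∩ domOp A).Nonempty →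
      ∀ x ∈ U, ∀ xs : StrongDual ℝ X,
        (∀ p ∈ A, p.1 ∈ U → 0 ≤ (xs - p.2) (x - p.1)) → (x, xs) ∈ A

/-- `A` is rectangular: `dom A × ran A ⊆ dom F_A`. -/
def IsRectangular (A : Set (X × StrongDual ℝ X)) : Prop :=
  (domOp A) ×ˢ (ranOp A) ⊆ {q : X × StrongDual ℝ X | fitz A q < ⊤}

/-- The graph of the duality map `J x = {x* : ⟨x,x*⟩ = ‖x‖² and ‖x*‖ = ‖x‖}`. -/
def dualityMapGraph : Set (X × StrongDual ℝ X) :=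
  {p | p.2 p.1 = ‖p.1‖ ^ 2 ∧ ‖p.2‖ = ‖p.1‖}

/-- The partial inf-convolution `(F₁ □₂ F₂)(x, x*) = inf_{v*} (F₁(x, x* − v*) + F₂(x, v*))`. -/
noncomputable def infConv2 (F1 F2 : X × StrongDual ℝ X → EReal) : X × StrongDual ℝ X → EReal :=
  fun q => ⨅ v : StrongDual ℝ X, (F1 (q.1, q.2 - v) + F2 (q.1, v))


/-!
By Baire's theorem, `f ≤ M` on some ball `B(z₀, s)`. For `x**` with `‖x** - ẑ₀‖ ≤ s` this makes
`h = f* - x**` on `X*` bounded below by `-M`; it is also convex, lower semicontinuous, and finite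
at every `a*` with `(a, a*) ∈ gra ∂f`. Ekeland's principle followed by a separation argument
(Brøndsted–Rockafellar) produces `v ∈ X*` and a subgradient `z ∈ ∂h(v)` with `‖z‖ ≤ ε`, and the
subgradient inequality of `h` tested at the points of `gra ∂f` says exactly that `(x** + z, v)` is
monotonically related to `∂f`. Ultramaximality then gives `x` with `x̂ = x** + z`. So a ball
around `ẑ₀` lies in the closure of the range of `X → X**`, which is a closed subspace, hence
everything.
-/

open Filter Topology Metric

section Ekeland

variable {α : Type*} [MetricSpace α]

def ekelandSet (g : α → ℝ) (ε : ℝ) (x : α) : Set α := {w | g w + ε * dist w x ≤ g x}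

variable {g : α → ℝ} {ε : ℝ}

lemma mem_ekelandSet_self (x : α) : x ∈ ekelandSet g ε x := by
  simp [ekelandSet]

lemma ekelandSet_subset (hε : 0 ≤ ε) {x y : α} (hy : y ∈ ekelandSet g ε x) :
    ekelandSet g ε y ⊆ ekelandSet g ε x := fun w hw => by
  have := dist_triangle w y x
  simp only [ekelandSet, mem_ofPred_eq] at hy hw ⊢
  nlinarith

lemma LowerSemicontinuous.isClosed_ekelandSet (hg : LowerSemicontinuous g) (x : α) :
    IsClosed (ekelandSet g ε x) :=
  (hg.add (continuous_const.mul (continuous_id.dist continuous_const)).lowerSemicontinuous)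
    |>.isClosed_preimage (g x)

lemma exists_mem_ekelandSet_subset_closedBall (hbdd : BddBelow (range g)) (hε : 0 < ε)
    (x : α) {r : ℝ} (hr : 0 < r) :
    ∃ y ∈ ekelandSet g ε x, ekelandSet g ε y ⊆ closedBall y r := by
  have : Nonempty (ekelandSet g ε x) := ⟨⟨x, mem_ekelandSet_self x⟩⟩
  have hbdd' : BddBelow (range fun w : ekelandSet g ε x => g w) :=
    hbdd.mono (range_comp_subset_range _ g)
  obtain ⟨⟨y, hyx⟩, hy⟩ := exists_lt_of_ciInf_lt
    (lt_add_of_pos_right (⨅ w : ekelandSet g ε x, g w) (mul_pos hε hr))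
  refine ⟨y, hyx, fun w hw => ?_⟩
  have hinf : ⨅ w : ekelandSet g ε x, g w ≤ g w :=
    ciInf_le hbdd' ⟨w, ekelandSet_subset hε.le hyx hw⟩
  simp only [ekelandSet, mem_ofPred_eq] at hw
  rw [mem_closedBall]
  nlinarith

/-- Ekeland's variational principle. -/
theorem LowerSemicontinuous.exists_forall_le_add_mul_dist [CompleteSpace α] [Nonempty α]
    (hg : LowerSemicontinuous g) (hbdd : BddBelow (range g)) (hε : 0 < ε) :
    ∃ v, ∀ w, g v ≤ g w + ε * dist w v := by
  choose next hnext_mem hnext_ball using fun (x : α) (n : ℕ) =>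
    exists_mem_ekelandSet_subset_closedBall hbdd hε x (Nat.one_div_pos_of_nat (n := n))
  let x : ℕ → α := fun n => Nat.rec (Classical.arbitrary α) (fun n y => next y n) n
  let s : ℕ → Set α := fun n => ekelandSet g ε (x (n + 1))
  have hs_ball (n : ℕ) : s n ⊆ closedBall (x (n + 1)) (1 / ((n : ℝ) + 1)) := hnext_ball _ n
  have hs_anti : Antitone s :=
    antitone_nat_of_succ_le fun n => ekelandSet_subset hε.le (hnext_mem _ _)
  have hs_bdd (n : ℕ) : Bornology.IsBounded (s n) := isBounded_closedBall.subset (hs_ball n)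
  have hs_diam : Tendsto (fun n => diam (s n)) atTop (𝓝 0) := by
    have := (tendsto_one_div_add_atTop_nhds_zero_nat (𝕜 := ℝ)).const_mul 2
    rw [mul_zero] at this
    exact squeeze_zero (fun n => diam_nonneg)
      (fun n => (diam_mono (hs_ball n) isBounded_closedBall).trans
        (diam_closedBall (by positivity))) this
  obtain ⟨v, hv⟩ := nonempty_iInter_of_nonempty_biInter
    (fun n => hg.isClosed_ekelandSet _) hs_bdd
    (fun N => ⟨x (N + 1), mem_iInter₂.2 fun n hn => hs_anti hn (mem_ekelandSet_self _)⟩) hs_diam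
  rw [mem_iInter] at hv
  refine ⟨v, fun w => le_of_not_gt fun hlt => ?_⟩
  have hw (n : ℕ) : w ∈ s n := ekelandSet_subset hε.le (hv n) hlt.le
  have hdist : dist w v ≤ 0 :=
    ge_of_tendsto' hs_diam fun n => dist_le_diam_of_mem (hs_bdd n) (hw n) (hv n)
  rw [dist_le_zero.1 hdist, dist_self, mul_zero, add_zero] at hlt
  exact hlt.false

theorem LowerSemicontinuous.exists_ne_top_forall_le_add_mul_dist [CompleteSpace α]
    {h : α → EReal} (hh : LowerSemicontinuous h) {C : ℝ} (hC : ∀ w, (C : EReal) ≤ h w)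
    {u : α} (hu : h u ≠ ⊤) (hε : 0 < ε) :
    ∃ v, h v ≠ ⊤ ∧ ∀ w, h v ≤ h w + ((ε * dist w v : ℝ) : EReal) := by
  let D := {x | h x ≤ h u}
  have : CompleteSpace D := (hh.isClosed_preimage (h u)).isComplete.completeSpace_coe
  have : Nonempty D := ⟨⟨u, le_refl (h u)⟩⟩
  have hgh (x : D) : (((h x).toReal : ℝ) : EReal) = h x :=
    EReal.coe_toReal (ne_top_of_le_ne_top hu x.2) (ne_bot_of_le_ne_bot (EReal.coe_ne_bot C) (hC x))
  have hg : LowerSemicontinuous fun x : D => (h x).toReal := fun x y (hy : y < _) => by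
    rw [← EReal.coe_lt_coe_iff, hgh] at hy
    filter_upwards [(continuous_subtype_val.tendsto x).eventually (hh x y hy)] with x' hx'
    rw [← hgh] at hx'
    exact EReal.coe_lt_coe_iff.1 hx'
  have hbdd : BddBelow (range fun x : D => (h x).toReal) := ⟨C, by
    rintro _ ⟨x, rfl⟩
    exact EReal.coe_le_coe_iff.1 ((hgh x).symm ▸ hC x)⟩
  obtain ⟨v, hv⟩ := hg.exists_forall_le_add_mul_dist hbdd hε
  refine ⟨v, ne_top_of_le_ne_top hu v.2, fun w => ?_⟩
  by_cases hw : h w ≤ h u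
  · rw [← hgh v, ← hgh ⟨w, hw⟩, ← EReal.coe_add, EReal.coe_le_coe_iff]
    exact hv ⟨w, hw⟩
  · calc h v ≤ h w := v.2.trans (le_of_not_ge hw)
      _ ≤ h w + ((ε * dist w v : ℝ) : EReal) :=
        le_add_of_nonneg_right (EReal.coe_nonneg.2 (by positivity))

end Ekeland

section ConvexAnalysis

variable {E : Type*} [NormedAddCommGroup E] [NormedSpace ℝ E]

theorem exists_affine_between {h : E → EReal} (hconv : Convex ℝ {q : E × ℝ | h q.1 ≤ q.2})
    {k : E → ℝ} (hk : ConcaveOn ℝ univ k) (hk_cont : Continuous k)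
    (hkh : ∀ x, (k x : EReal) ≤ h x) {x₀ : E} (hx₀ : h x₀ ≠ ⊤) :
    ∃ (ℓ : StrongDual ℝ E) (c : ℝ), (∀ x, k x ≤ ℓ x + c) ∧ ∀ x, ((ℓ x + c : ℝ) : EReal) ≤ h x := by
  have hO_open : IsOpen {p : E × ℝ | p.1 ∈ univ ∧ p.2 < k p.1} := by
    simp only [mem_univ, true_and]
    exact isOpen_lt continuous_snd (hk_cont.comp continuous_fst)
  have hdisj : Disjoint {p : E × ℝ | p.1 ∈ univ ∧ p.2 < k p.1} {q : E × ℝ | h q.1 ≤ q.2} := by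
    refine disjoint_left.2 ?_
    rintro ⟨x, t⟩ ⟨-, hxt⟩ (hT : h x ≤ t)
    exact ((hkh x).trans hT).not_gt (EReal.coe_lt_coe_iff.2 hxt)
  obtain ⟨φ, s, hφO, hφT⟩ :=
    geometric_hahn_banach_open hk.convex_strict_hypograph hO_open hconv hdisj
  let g : StrongDual ℝ E := φ.comp (ContinuousLinearMap.inl ℝ E ℝ)
  let κ : ℝ := φ (0, 1)
  have hφ (x : E) (t : ℝ) : φ (x, t) = g x + t * κ := by
    have : ((x, t) : E × ℝ) = (x, 0) + t • (0, 1) := by simp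
    rw [this, map_add, map_smul, smul_eq_mul]
    rfl
  have hO_mem (x : E) (t : ℝ) (ht : t < k x) : g x + t * κ < s := by
    rw [← hφ]; exact hφO _ ⟨mem_univ _, ht⟩
  have hT_mem (x : E) (t : ℝ) (ht : h x ≤ t) : s ≤ g x + t * κ := by
    rw [← hφ]; exact hφT _ ht
  have hκ : 0 < κ := by
    let t₀ := max (h x₀).toReal (k x₀)
    have hT₀ := hT_mem x₀ t₀
      ((EReal.le_coe_toReal hx₀).trans (EReal.coe_le_coe_iff.2 (le_max_left _ _)))
    nlinarith [hO_mem x₀ (k x₀ - 1) (by linarith), le_max_right (h x₀).toReal (k x₀)]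
  -- the separating hyperplane is the graph of `x ↦ (s - g x) / κ = -κ⁻¹ g x + s / κ`
  have haff (x : E) : (-κ⁻¹ • g) x + s / κ = (s - g x) / κ := by
    rw [smul_apply, smul_eq_mul]
    ring
  refine ⟨-κ⁻¹ • g, s / κ, fun x => haff x ▸ ?_, fun x => haff x ▸ ?_⟩
  · exact le_of_forall_lt fun t ht => by rw [lt_div_iff₀ hκ]; linarith [hO_mem x t ht]
  · induction hx : h x using EReal.rec with
    | bot => exact absurd (hx ▸ hkh x) (by simp)
    | coe t => exact EReal.coe_le_coe_iff.2 (by rw [div_le_iff₀ hκ]; linarith [hT_mem x t hx.le])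
    | top => exact le_top

theorem exists_subgradient_norm_le {h : E → EReal}
    (hconv : Convex ℝ {q : E × ℝ | h q.1 ≤ q.2}) {v : E} {r : ℝ} (hv : h v = r) {ε : ℝ}
    (hε : 0 ≤ ε) (hmin : ∀ w, h v ≤ h w + ((ε * dist w v : ℝ) : EReal)) :
    ∃ z : StrongDual ℝ E, ‖z‖ ≤ ε ∧ ∀ w, ((r + z (w - v) : ℝ) : EReal) ≤ h w := by
  have hkh (x : E) : ((r - ε * dist x v : ℝ) : EReal) ≤ h x := by
    rw [EReal.coe_sub, EReal.sub_le_iff_le_add (.inl (EReal.coe_ne_bot _))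
      (.inl (EReal.coe_ne_top _)), ← hv]
    exact hmin x
  obtain ⟨ℓ, c, hkℓ, hℓh⟩ := exists_affine_between (k := fun x => r - ε * dist x v) hconv
    ((concaveOn_const r convex_univ).sub ((convexOn_univ_dist v).smul hε)) (by fun_prop) hkh
    (hv ▸ EReal.coe_ne_top r)
  have hc : ℓ v + c = r :=
    le_antisymm (EReal.coe_le_coe_iff.1 (hv ▸ hℓh v)) (by simpa using hkℓ v)
  refine ⟨ℓ, ContinuousLinearMap.opNorm_le_bound _ hε fun d => ?_, fun w => ?_⟩
  · have h₁ := hkℓ (v + d)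
    have h₂ := hkℓ (v - d)
    simp only [map_add, map_sub, dist_eq_norm, add_sub_cancel_left, sub_sub_cancel_left,
      norm_neg] at h₁ h₂
    rw [Real.norm_eq_abs, abs_le]
    constructor <;> linarith
  · rw [map_sub, ← hc, show ℓ v + c + (ℓ w - ℓ v) = ℓ w + c by ring]
    exact hℓh w

section AffineSupremum

variable {ι : Type*}

noncomputable def iSupAffine (ℓ : ι → StrongDual ℝ E) (c : ι → ℝ) (y : E) : EReal :=
  ⨆ i, ((ℓ i y + c i : ℝ) : EReal)

variable (ℓ : ι → StrongDual ℝ E) (c : ι → ℝ)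

lemma lowerSemicontinuous_iSupAffine : LowerSemicontinuous (iSupAffine ℓ c) :=
  lowerSemicontinuous_iSup fun i =>
    (continuous_coe_real_ereal.comp ((ℓ i).continuous.add continuous_const)).lowerSemicontinuous

lemma convex_epigraph_iSupAffine : Convex ℝ {q : E × ℝ | iSupAffine ℓ c q.1 ≤ q.2} := by
  rintro ⟨y₁, t₁⟩ (h₁ : iSupAffine ℓ c y₁ ≤ t₁) ⟨y₂, t₂⟩ (h₂ : iSupAffine ℓ c y₂ ≤ t₂)
    a b ha hb hab
  refine iSup_le fun i => EReal.coe_le_coe_iff.2 ?_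
  have e₁ := EReal.coe_le_coe_iff.1 ((le_iSup _ i).trans h₁)
  have e₂ := EReal.coe_le_coe_iff.1 ((le_iSup _ i).trans h₂)
  calc ℓ i (a • y₁ + b • y₂) + c i = a * (ℓ i y₁ + c i) + b * (ℓ i y₂ + c i) := by
        simp only [map_add, map_smul, smul_eq_mul]
        linear_combination (c i) * hab.symm
    _ ≤ a * t₁ + b * t₂ := by gcongr

/-- A Brøndsted–Rockafellar type theorem. -/
theorem exists_subgradient_norm_le_of_iSupAffine [CompleteSpace E] {C : ℝ}
    (hC : ∀ y, (C : EReal) ≤ iSupAffine ℓ c y) {u : E} (hu : iSupAffine ℓ c u ≠ ⊤) {ε : ℝ}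
    (hε : 0 < ε) :
    ∃ v : E, ∃ r : ℝ, iSupAffine ℓ c v = r ∧
      ∃ z : StrongDual ℝ E, ‖z‖ ≤ ε ∧ ∀ w, ((r + z (w - v) : ℝ) : EReal) ≤ iSupAffine ℓ c w := by
  obtain ⟨v, hv, hmin⟩ :=
    (lowerSemicontinuous_iSupAffine ℓ c).exists_ne_top_forall_le_add_mul_dist hC hu hε
  have hv_eq := EReal.coe_toReal hv (ne_bot_of_le_ne_bot (EReal.coe_ne_bot C) (hC v))
  exact ⟨v, _, hv_eq.symm,
    exists_subgradient_norm_le (convex_epigraph_iSupAffine ℓ c) hv_eq.symm hε.le hmin⟩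

end AffineSupremum

lemma StrongDual.exists_norm_lt_and_lt_apply (y : StrongDual ℝ E) {s t : ℝ} (hs : 0 < s)
    (ht : t < s * ‖y‖) : ∃ w, ‖w‖ < s ∧ t < y w := by
  obtain ⟨x, hx, hxt⟩ := y.exists_lt_apply_of_lt_opNorm (r := t / s) (by rwa [div_lt_iff₀' hs])
  obtain ⟨x', hx', hxt'⟩ : ∃ x', ‖x'‖ < 1 ∧ t / s < y x' := by
    rw [Real.norm_eq_abs] at hxt
    rcases le_total 0 (y x) with h | h
    · exact ⟨x, hx, by rwa [abs_of_nonneg h] at hxt⟩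
    · exact ⟨-x, by rwa [norm_neg], by rwa [map_neg, ← abs_of_nonpos h]⟩
  refine ⟨s • x', ?_, ?_⟩
  · rw [norm_smul, Real.norm_of_nonneg hs.le]
    exact mul_lt_of_lt_one_right hs hx'
  · rwa [map_smul, smul_eq_mul, ← div_lt_iff₀' hs]

end ConvexAnalysis

theorem LowerSemicontinuous.exists_isOpen_forall_le {α : Type*} [TopologicalSpace α]
    [BaireSpace α] {f : α → EReal} (hf : LowerSemicontinuous f)
    (hint : (interior {x | f x < ⊤}).Nonempty) :
    ∃ W : Set α, IsOpen W ∧ W.Nonempty ∧ ∃ M : ℝ, ∀ u ∈ W, f u ≤ M := by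
  set U := interior {x | f x < ⊤}
  let G : ℕ → Set α := fun n => {x | f x ≤ n} ∪ Uᶜ
  have hG_closed (n : ℕ) : IsClosed (G n) :=
    (hf.isClosed_preimage _).union isOpen_interior.isClosed_compl
  have hG_cover : ⋃ n, G n = univ := by
    refine eq_univ_of_forall fun x => ?_
    by_cases hx : x ∈ U
    · obtain ⟨n, hn⟩ := exists_nat_ge (f x).toReal
      have hfx : x ∈ {x | f x < ⊤} := interior_subset hx
      exact mem_iUnion.2
        ⟨n, Or.inl ((EReal.le_coe_toReal (ne_of_lt hfx)).trans (by exact_mod_cast hn))⟩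
    · exact mem_iUnion.2 ⟨0, Or.inr hx⟩
  obtain ⟨x, hxU, hx⟩ :=
    (dense_iUnion_interior_of_closed hG_closed hG_cover).inter_open_nonempty U isOpen_interior hint
  obtain ⟨n, hn⟩ := mem_iUnion.1 hx
  refine ⟨U ∩ interior (G n), isOpen_interior.inter isOpen_interior, ⟨x, hxU, hn⟩, n,
    fun u ⟨huU, huG⟩ => ?_⟩
  exact (interior_subset huG).resolve_right (not_not_intro huU)

theorem LinearIsometry.surjective_of_ball_subset_closure_range {𝕜 E F : Type*}
    [NontriviallyNormedField 𝕜] [NormedAddCommGroup E] [NormedSpace 𝕜 E] [CompleteSpace E]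
    [NormedAddCommGroup F] [NormedSpace 𝕜 F] (L : E →ₗᵢ[𝕜] F) {y : F} {s : ℝ} (hs : 0 < s)
    (hL : ball y s ⊆ closure (range L)) :
    Function.Surjective L := by
  rw [L.isometry.isClosedEmbedding.isClosed_range.closure_eq] at hL
  have hy : y ∈ interior (LinearMap.range L.toLinearMap : Set F) :=
    interior_maximal hL isOpen_ball (mem_ball_self hs)
  exact LinearMap.range_eq_top.1 (Submodule.eq_top_of_nonempty_interior' _ ⟨y, hy⟩)

def subdifferentialGraph (f : X → EReal) : Set (X × StrongDual ℝ X) :=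
  {p | ∀ y, f p.1 + ((p.2 (y - p.1) : ℝ) : EReal) ≤ f y}

def BidualMonotonicallyRelated (A : Set (X × StrongDual ℝ X))
    (xss : StrongDual ℝ (StrongDual ℝ X)) (xs : StrongDual ℝ X) : Prop :=
  ∀ p ∈ A, 0 ≤ (xss - inclusionInDoubleDual ℝ X p.1) (xs - p.2)

lemma IsUltraMaxMonotone.nonempty {A : Set (X × StrongDual ℝ X)} (hA : IsUltraMaxMonotone A) :
    A.Nonempty := by
  by_contra h
  rw [not_nonempty_iff_eq_empty] at h
  obtain ⟨x, -, hx⟩ := hA.2 0 0 (by simp [h])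
  simp [h] at hx

lemma ne_top_of_mem_subdifferentialGraph {f : X → EReal} {p : X × StrongDual ℝ X}
    (hp : p ∈ subdifferentialGraph f) {y : X} (hy : f y ≠ ⊤) : f p.1 ≠ ⊤ := fun htop => by
  have := hp y
  rw [htop, EReal.top_add_coe] at this
  exact hy (top_le_iff.1 this)

/-- `y ↦ f*(y) - ⟨y, x**⟩`, written as a supremum over the epigraph of `f`. -/
noncomputable def conjugateSubBidual (f : X → EReal) (xss : StrongDual ℝ (StrongDual ℝ X)) :
    StrongDual ℝ X → EReal :=
  iSupAffine (fun q : {q : X × ℝ // f q.1 ≤ q.2} => inclusionInDoubleDual ℝ X q.1.1 - xss)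
    (fun q => -q.1.2)

section ConjugateSubBidual

variable {f : X → EReal} {xss : StrongDual ℝ (StrongDual ℝ X)}

lemma le_conjugateSubBidual {x : X} {t : ℝ} (hxt : f x ≤ t) (y : StrongDual ℝ X) :
    ((y x - xss y - t : ℝ) : EReal) ≤ conjugateSubBidual f xss y := by
  refine le_of_eq_of_le ?_ (le_iSup _ (⟨(x, t), hxt⟩ : {q : X × ℝ // f q.1 ≤ q.2}))
  simp [dual_def, sub_eq_add_neg]

lemma conjugateSubBidual_le_of_mem {p : X × StrongDual ℝ X} (hp : p ∈ subdifferentialGraph f)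
    {a : ℝ} (ha : f p.1 = a) :
    conjugateSubBidual f xss p.2 ≤ ((p.2 p.1 - xss p.2 - a : ℝ) : EReal) := by
  refine iSup_le fun ⟨(x, t), (hxt : f x ≤ t)⟩ => EReal.coe_le_coe_iff.2 ?_
  have := (hp x).trans hxt
  rw [ha, ← EReal.coe_add, EReal.coe_le_coe_iff, map_sub] at this
  simp only [sub_apply, dual_def]
  linarith

lemma coe_neg_le_conjugateSubBidual {z₀ : X} {s M : ℝ} (hs : 0 < s)
    (hball : ∀ u ∈ ball z₀ s, f u ≤ M) (hxss : ‖xss - inclusionInDoubleDual ℝ X z₀‖ ≤ s)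
    (y : StrongDual ℝ X) : ((-M : ℝ) : EReal) ≤ conjugateSubBidual f xss y := by
  refine EReal.ge_of_forall_gt_iff_ge.1 fun t ht => ?_
  rw [EReal.coe_lt_coe_iff] at ht
  obtain ⟨w, hw, hyw⟩ := y.exists_norm_lt_and_lt_apply hs (t := s * ‖y‖ + t + M) (by linarith)
  have hfw : f (z₀ + w) ≤ M := hball _ (by rwa [mem_ball, dist_eq_norm, add_sub_cancel_left])
  refine le_trans (EReal.coe_le_coe_iff.2 ?_) (le_conjugateSubBidual hfw y)
  have hxss_y : (xss - inclusionInDoubleDual ℝ X z₀) y ≤ s * ‖y‖ :=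
    (Real.le_norm_self _).trans (((xss - _).le_opNorm y).trans (by gcongr))
  rw [sub_apply, dual_def] at hxss_y
  rw [map_add]
  linarith

lemma bidualMonotonicallyRelated_add_of_subgradient (hbot : ∀ x, f x ≠ ⊥)
    (hfin : ∀ p ∈ subdifferentialGraph f, f p.1 ≠ ⊤) {v : StrongDual ℝ X} {r : ℝ}
    (hv : conjugateSubBidual f xss v = r) {z : StrongDual ℝ (StrongDual ℝ X)}
    (hz : ∀ w, ((r + z (w - v) : ℝ) : EReal) ≤ conjugateSubBidual f xss w) :
    BidualMonotonicallyRelated (subdifferentialGraph f) (xss + z) v := by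
  intro p hp
  have ha := (EReal.coe_toReal (hfin p hp) (hbot p.1)).symm
  have h₁ := EReal.coe_le_coe_iff.1 (hv ▸ le_conjugateSubBidual ha.le v)
  have h₂ := EReal.coe_le_coe_iff.1 ((hz p.2).trans (conjugateSubBidual_le_of_mem hp ha))
  simp only [sub_apply, add_apply, dual_def, map_sub] at h₂ ⊢
  linarith

end ConjugateSubBidual

theorem exists_norm_sub_inclusionInDoubleDual_le [CompleteSpace X] {f : X → EReal}
    (hbot : ∀ x, f x ≠ ⊥) {z₀ : X} {s M : ℝ} (hs : 0 < s) (hball : ∀ u ∈ ball z₀ s, f u ≤ M)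
    (hultra : IsUltraMaxMonotone (subdifferentialGraph f))
    {xss : StrongDual ℝ (StrongDual ℝ X)} (hxss : ‖xss - inclusionInDoubleDual ℝ X z₀‖ ≤ s)
    {ε : ℝ} (hε : 0 < ε) : ∃ x, ‖xss - inclusionInDoubleDual ℝ X x‖ ≤ ε := by
  have hfin (p) (hp : p ∈ subdifferentialGraph f) : f p.1 ≠ ⊤ :=
    ne_top_of_mem_subdifferentialGraph hp
      (ne_top_of_le_ne_top (EReal.coe_ne_top M) (hball z₀ (mem_ball_self hs)))
  obtain ⟨p, hp⟩ := hultra.nonempty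
  have hp_fin : conjugateSubBidual f xss p.2 ≠ ⊤ := ne_top_of_le_ne_top (EReal.coe_ne_top _)
    (conjugateSubBidual_le_of_mem hp (EReal.coe_toReal (hfin p hp) (hbot p.1)).symm)
  obtain ⟨v, r, hv, z, hz, hsub⟩ := exists_subgradient_norm_le_of_iSupAffine _ _
    (coe_neg_le_conjugateSubBidual hs hball hxss) hp_fin hε
  obtain ⟨x, hx, -⟩ := hultra.2 (xss + z) v
    (bidualMonotonicallyRelated_add_of_subgradient hbot hfin hv hsub)
  refine ⟨x, ?_⟩
  rw [← hx]
  exact (congrArg norm (sub_add_cancel_left xss z)).trans_le ((norm_neg z).trans_le hz)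

theorem stmt13_general [CompleteSpace X] (f : X → EReal)
    (hbot : ∀ x, f x ≠ ⊥)
    (hlsc : LowerSemicontinuous f)
    (hint : (interior {x : X | f x < ⊤}).Nonempty)
    (hultra : IsUltraMaxMonotone
      {p : X × StrongDual ℝ X | ∀ y : X, f p.1 + ((p.2 (y - p.1) : ℝ) : EReal) ≤ f y}) :
    Function.Surjective (inclusionInDoubleDual ℝ X) := by
  obtain ⟨W, hW_open, ⟨z₀, hz₀⟩, M, hM⟩ := hlsc.exists_isOpen_forall_le hint
  obtain ⟨s, hs, hball⟩ := Metric.isOpen_iff.1 hW_open z₀ hz₀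
  refine LinearIsometry.surjective_of_ball_subset_closure_range (𝕜 := ℝ) (E := X)
    (inclusionInDoubleDualLi ℝ) (y := inclusionInDoubleDual ℝ X z₀) hs fun xss hxss =>
    Metric.mem_closure_iff.2 fun ε hε => ?_
  obtain ⟨x, hx⟩ := exists_norm_sub_inclusionInDoubleDual_le hbot hs (fun u hu => hM u (hball hu))
    hultra (mem_ball_iff_norm.1 hxss).le (half_pos hε)
  exact ⟨_, ⟨x, rfl⟩, by rw [dist_eq_norm]; exact hx.trans_lt (half_lt_self hε)⟩

theorem stmt13 [CompleteSpace X] (f : X → EReal)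
    (hbot : ∀ x, f x ≠ ⊥) (hproper : ∃ x, f x ≠ ⊤)
    (hlsc : LowerSemicontinuous f)
    (hconv : ∀ x y : X, ∀ a b : ℝ, 0 ≤ a → 0 ≤ b → a + b = 1 →
      f (a • x + b • y) ≤ (a : EReal) * f x + (b : EReal) * f y)
    (hint : (interior {x : X | f x < ⊤}).Nonempty)
    (hultra : IsUltraMaxMonotone
      {p : X × StrongDual ℝ X | ∀ y : X, f p.1 + ((p.2 (y - p.1) : ℝ) : EReal) ≤ f y}) :
    Function.Surjective (inclusionInDoubleDual ℝ X) :=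
  stmt13_general f hbot hlsc hint hultra
end

section
/- Let X be a real Banach space and let A : X → X* be a continuous linear monotone operator that is ultramaximally monotone. Define A† : X → X* by (A† x)(y) = (A y)(x) and set S := (A − A†)/2. Then S is ultramaximally monotone. -/
open Pointwise Set NormedSpace

variable {X : Type*} [NormedAddCommGroup X] [NormedSpace ℝ X]

/-!
Write `A = P + S` with `P = (A + A†)/2` symmetric and `S = (A − A†)/2` skew; `P` is positive
since `⟨A a, a⟩ = ⟨P a, a⟩` and `A` is monotone. Let `(x**, x*)` be monotonically related to
`gra S`. Testing against `(t a, t S a)` for all real `t` forces `⟨S a, x**⟩ + ⟨a, x*⟩ = 0` and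
`⟨x*, x**⟩ ≥ 0`, and then `(x**, x* + P*x**)` is monotonically related to `gra A`, where
`P*w = w ∘ P`: the pairing equals `⟨x*, x**⟩ + ⟨P*(x** − â), x** − â⟩`, and the canonical
extension `w ↦ ⟨P*w, w⟩` of a positive symmetric form to the bidual is again positive.
Ultramaximality of `A` gives `x** = x̂` and `x* + P x = A x`, so `x* = S x`.

For positivity on the bidual, `a ↦ 2⟨P a, w⟩ − ⟨P a, a⟩` is bounded above; at an
`ε²`-maximiser `a`, the perturbations `a + t b` show `‖P*w − P a‖ ≤ ε ‖P‖^{1/2}`, hence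
`⟨P*w, w⟩ ≥ ⟨P a, w⟩ − O(ε) ≥ −O(ε)`.
-/

open ContinuousLinearMap Filter Topology

def opGraph (T : X →L[ℝ] StrongDual ℝ X) : Set (X × StrongDual ℝ X) := {p | p.2 = T p.1}

def IsBidualMonotonicallyRelated (A : Set (X × StrongDual ℝ X))
    (xss : StrongDual ℝ (StrongDual ℝ X)) (xs : StrongDual ℝ X) : Prop :=
  ∀ p ∈ A, 0 ≤ (xss - inclusionInDoubleDual ℝ X p.1) (xs - p.2)

section PositiveSymmetric

variable (P : X →L[ℝ] StrongDual ℝ X)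

lemma apply_self_le_opNorm_mul_sq (b : X) : P b b ≤ ‖P‖ * ‖b‖ ^ 2 :=
  (le_abs_self _).trans ((P.le_opNorm₂ b b).trans_eq (by ring))

lemma sq_apply_le_mul_apply_self (hP : ∀ a b, P a b = P b a) (hpos : ∀ a, 0 ≤ P a a)
    (a b : X) : P a b ^ 2 ≤ P a a * P b b := by
  have := discrim_le_zero (a := P b b) (b := 2 * P a b) (c := P a a) fun t => by
    have := hpos (a + t • b)
    simp only [map_add, map_smul, add_apply, smul_apply, smul_eq_mul, hP b a] at this
    linarith
  rw [discrim] at this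
  linarith

lemma norm_apply_le_sqrt (hP : ∀ a b, P a b = P b a) (hpos : ∀ a, 0 ≤ P a a) (a : X) :
    ‖P a‖ ≤ √(‖P‖ * P a a) := by
  refine opNorm_le_bound _ (Real.sqrt_nonneg _) fun b => ?_
  rw [Real.norm_eq_abs]
  refine abs_le_of_sq_le_sq ?_ (by positivity)
  calc P a b ^ 2 ≤ P a a * P b b := sq_apply_le_mul_apply_self P hP hpos a b
    _ ≤ P a a * (‖P‖ * ‖b‖ ^ 2) := by
      gcongr
      · exact hpos a
      · exact apply_self_le_opNorm_mul_sq P b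
    _ = (√(‖P‖ * P a a) * ‖b‖) ^ 2 := by
      rw [mul_pow, Real.sq_sqrt (mul_nonneg (norm_nonneg P) (hpos a))]
      ring

lemma norm_sub_apply_le_of_almost_maximizer (hP : ∀ a b, P a b = P b a) (φ : StrongDual ℝ X)
    {a : X} {ε : ℝ} (hε : 0 ≤ ε)
    (hmax : ∀ c, 2 * φ c - P c c ≤ 2 * φ a - P a a + ε ^ 2) :
    ‖φ - P a‖ ≤ ε * √‖P‖ := by
  refine opNorm_le_bound _ (by positivity) fun b => ?_
  have hdiscrim := discrim_le_zero (a := P b b) (b := -2 * (φ b - P a b)) (c := ε ^ 2)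
    fun t => by
      have := hmax (a + t • b)
      simp only [map_add, map_smul, add_apply, smul_apply, smul_eq_mul, hP b a] at this
      linarith
  rw [discrim] at hdiscrim
  rw [sub_apply, Real.norm_eq_abs]
  refine abs_le_of_sq_le_sq ?_ (by positivity)
  calc (φ b - P a b) ^ 2 ≤ ε ^ 2 * P b b := by linarith
    _ ≤ ε ^ 2 * (‖P‖ * ‖b‖ ^ 2) := by gcongr; exact apply_self_le_opNorm_mul_sq P b
    _ = (ε * √‖P‖ * ‖b‖) ^ 2 := by rw [mul_pow, mul_pow, Real.sq_sqrt (norm_nonneg P)]; ring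

theorem bidual_apply_comp_nonneg (hP : ∀ a b, P a b = P b a) (hpos : ∀ a, 0 ≤ P a a)
    (w : StrongDual ℝ (StrongDual ℝ X)) : 0 ≤ w (w.comp P) := by
  set f : X → ℝ := fun c => 2 * w (P c) - P c c with hf
  have hbdd : BddAbove (Set.range f) := by
    refine ⟨‖w‖ ^ 2 * ‖P‖, Set.forall_mem_range.2 fun c => ?_⟩
    have hwP : w (P c) ≤ ‖w‖ * (√‖P‖ * √(P c c)) := by
      rw [← Real.sqrt_mul (norm_nonneg P)]
      exact (le_abs_self _).trans ((w.le_opNorm _).trans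
        (by gcongr; exact norm_apply_le_sqrt P hP hpos c))
    nlinarith [sq_nonneg (‖w‖ * √‖P‖ - √(P c c)), Real.sq_sqrt (norm_nonneg P),
      Real.sq_sqrt (hpos c)]
  have hlower : ∀ ε > 0, -(ε ^ 2 / 2) - ‖w‖ * (ε * √‖P‖) ≤ w (w.comp P) := by
    intro ε hε
    obtain ⟨_, ⟨a, rfl⟩, ha⟩ := exists_lt_of_lt_csSup (Set.range_nonempty f)
      (sub_lt_self _ (by positivity : 0 < ε ^ 2))
    have hmax : ∀ c, 2 * w.comp P c - P c c ≤ 2 * w.comp P a - P a a + ε ^ 2 := fun c => by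
      have := le_csSup hbdd (Set.mem_range_self c)
      simp only [comp_apply]
      linarith
    have hf0 : f 0 ≤ sSup (Set.range f) := le_csSup hbdd (Set.mem_range_self 0)
    have hnorm := norm_sub_apply_le_of_almost_maximizer P hP (w.comp P) hε.le hmax
    have hw : -(‖w‖ * (ε * √‖P‖)) ≤ w (w.comp P - P a) :=
      neg_le_of_abs_le ((w.le_opNorm _).trans (by gcongr))
    simp only [hf, map_zero, mul_zero, sub_zero] at ha hf0
    rw [map_sub] at hw
    linarith [hpos a]
  have hlim : Tendsto (fun ε : ℝ => -(ε ^ 2 / 2) - ‖w‖ * (ε * √‖P‖)) (𝓝[>] 0) (𝓝 0) := by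
    have : Continuous fun ε : ℝ => -(ε ^ 2 / 2) - ‖w‖ * (ε * √‖P‖) := by fun_prop
    simpa using (this.tendsto 0).mono_left nhdsWithin_le_nhds
  exact le_of_tendsto hlim (eventually_nhdsWithin_of_forall hlower)

end PositiveSymmetric

lemma sub_inclusionInDoubleDual_apply_sub (w : StrongDual ℝ (StrongDual ℝ X)) (a : X)
    (φ ψ : StrongDual ℝ X) :
    (w - inclusionInDoubleDual ℝ X a) (φ - ψ) = w φ - w ψ - φ a + ψ a := by
  simp only [map_sub, sub_apply, dual_def]
  ring

lemma inclusionInDoubleDual_comp_of_symm {P : X →L[ℝ] StrongDual ℝ X}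
    (hP : ∀ a b, P a b = P b a) (a : X) : (inclusionInDoubleDual ℝ X a).comp P = P a := by
  ext b
  simp only [comp_apply, dual_def, hP b a]

lemma isMonotoneOp_opGraph {T : X →L[ℝ] StrongDual ℝ X} (hT : ∀ a, 0 ≤ T a a) :
    IsMonotoneOp (opGraph T) := by
  rintro ⟨p, _⟩ (rfl : _ = T p) ⟨q, _⟩ (rfl : _ = T q)
  rw [← map_sub]
  exact hT _

lemma IsBidualMonotonicallyRelated.skew_pairing_eq_zero_and_nonneg {S : X →L[ℝ] StrongDual ℝ X}
    (hS : ∀ a, S a a = 0) {xss : StrongDual ℝ (StrongDual ℝ X)} {xs : StrongDual ℝ X}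
    (h : IsBidualMonotonicallyRelated (opGraph S) xss xs) :
    (∀ a, xss (S a) + xs a = 0) ∧ 0 ≤ xss xs := by
  have hline (t : ℝ) (a : X) : 0 ≤ xss xs - t * (xss (S a) + xs a) := by
    have := h (t • a, S (t • a)) rfl
    rw [sub_inclusionInDoubleDual_apply_sub] at this
    simp only [map_smul, smul_apply, smul_eq_mul, hS] at this
    linarith
  refine ⟨fun a => ?_, by simpa using hline 0 0⟩
  have := discrim_le_zero (a := 0) (b := -(xss (S a) + xs a)) (c := xss xs) fun t => by
    linarith [hline t a]
  rw [discrim] at this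
  nlinarith

theorem isUltraMaxMonotone_opGraph_skew_of_add_symm {P S : X →L[ℝ] StrongDual ℝ X}
    (hP : ∀ a b, P a b = P b a) (hS : ∀ a, S a a = 0)
    (h : IsUltraMaxMonotone (opGraph (P + S))) : IsUltraMaxMonotone (opGraph S) := by
  have hpos (a : X) : 0 ≤ P a a := by
    simpa [hS] using h.1 (a, (P + S) a) rfl (0, (P + S) 0) rfl
  refine ⟨isMonotoneOp_opGraph fun a => (hS a).ge, fun xss xs hrel => ?_⟩
  obtain ⟨hskew, hxs⟩ := IsBidualMonotonicallyRelated.skew_pairing_eq_zero_and_nonneg hS hrel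
  have hrelA : IsBidualMonotonicallyRelated (opGraph (P + S)) xss (xs + xss.comp P) := by
    rintro ⟨a, _⟩ (rfl : _ = (P + S) a)
    have hw := bidual_apply_comp_nonneg P hP hpos (xss - inclusionInDoubleDual ℝ X a)
    rw [sub_comp, inclusionInDoubleDual_comp_of_symm hP, sub_inclusionInDoubleDual_apply_sub]
      at hw
    rw [sub_inclusionInDoubleDual_apply_sub]
    simp only [comp_apply, add_apply, map_add, hS] at hw ⊢
    linarith [hskew a]
  obtain ⟨x, rfl, hx⟩ := h.2 _ _ hrelA
  refine ⟨x, rfl, ?_⟩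
  change xs + (inclusionInDoubleDual ℝ X x).comp P = P x + S x at hx
  rw [inclusionInDoubleDual_comp_of_symm hP, add_comm] at hx
  exact add_left_cancel hx

theorem stmt14_general (A : X →L[ℝ] StrongDual ℝ X)
    (hultra : IsUltraMaxMonotone {p : X × StrongDual ℝ X | p.2 = A p.1}) :
    IsUltraMaxMonotone
      {p : X × StrongDual ℝ X | p.2 = ((2 : ℝ)⁻¹ • (A - ContinuousLinearMap.flip A)) p.1} := by
  have hA : A = (2 : ℝ)⁻¹ • (A + A.flip) + (2 : ℝ)⁻¹ • (A - A.flip) := by module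
  refine isUltraMaxMonotone_opGraph_skew_of_add_symm (fun a b => ?_) (fun a => ?_) (hA ▸ hultra)
  · simp only [smul_apply, add_apply, flip_apply, add_comm]
  · simp only [smul_apply, sub_apply, flip_apply, sub_self, smul_zero]

theorem stmt14 [CompleteSpace X] (A : X →L[ℝ] StrongDual ℝ X)
    (hmono : ∀ x y : X, 0 ≤ (A x - A y) (x - y))
    (hultra : IsUltraMaxMonotone {p : X × StrongDual ℝ X | p.2 = A p.1}) :
    IsUltraMaxMonotone
      {p : X × StrongDual ℝ X | p.2 = ((2 : ℝ)⁻¹ • (A - ContinuousLinearMap.flip A)) p.1} :=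
  stmt14_general A hultra
end

section
/- Let X be a real Banach space and let A : X → X* be a continuous linear ultramaximally monotone operator. Suppose there exists δ > 0 such that ⟨A x, x⟩ ≥ δ‖x‖² for all x ∈ X. Then X is reflexive. -/
/-!
If `B` is a coercive continuous bilinear form on `E`, its symmetrisation `(B x y + B y x) / 2` is an
inner product whose norm is equivalent to the original one (bounded above by `‖B‖` and below by
the coercivity constant), so `E` is isomorphic to a Hilbert space. Hilbert spaces are reflexive by
the Riesz representation theorem, and reflexivity is preserved by isomorphisms. Apply this to
`B x y = ⟨A x, y⟩`.
-/

open Pointwise Set NormedSpace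

variable {X : Type*} [NormedAddCommGroup X] [NormedSpace ℝ X]

theorem ContinuousLinearEquiv.surjective_inclusionInDoubleDual {𝕜 E F : Type*} [RCLike 𝕜]
    [NormedAddCommGroup E] [NormedSpace 𝕜 E] [NormedAddCommGroup F] [NormedSpace 𝕜 F]
    (e : E ≃L[𝕜] F) (hE : Function.Surjective (inclusionInDoubleDual 𝕜 E)) :
    Function.Surjective (inclusionInDoubleDual 𝕜 F) := by
  intro φ
  let dualEquiv : StrongDual 𝕜 E ≃L[𝕜] StrongDual 𝕜 F := e.arrowCongr (.refl 𝕜 𝕜)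
  obtain ⟨x, hx⟩ := hE (φ.comp (dualEquiv : StrongDual 𝕜 E →L[𝕜] StrongDual 𝕜 F))
  refine ⟨e x, ContinuousLinearMap.ext fun f => ?_⟩
  have hf : dualEquiv (f.comp (e : E →L[𝕜] F)) = f := by ext; simp [dualEquiv]
  simpa [hf] using congrArg (fun ψ => ψ (f.comp (e : E →L[𝕜] F))) hx

theorem InnerProductSpace.surjective_inclusionInDoubleDual {E : Type*}
    [NormedAddCommGroup E] [InnerProductSpace ℝ E] [CompleteSpace E] :
    Function.Surjective (inclusionInDoubleDual ℝ E) := by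
  intro φ
  refine ⟨(toDual ℝ E).symm (φ.comp (innerSL ℝ)), ContinuousLinearMap.ext fun f => ?_⟩
  obtain ⟨y, rfl⟩ := (toDual ℝ E).surjective f
  rw [dual_def, toDual_apply_apply, real_inner_comm, toDual_symm_apply]
  rfl

universe u

section Coercive

variable {E : Type u} [NormedAddCommGroup E] [NormedSpace ℝ E]

/-- `E` with its norm forgotten, so that it can carry the inner product induced by `B`. -/
def WithBilin (_B : E →L[ℝ] E →L[ℝ] ℝ) : Type u := E

namespace WithBilin

variable (B : E →L[ℝ] E →L[ℝ] ℝ)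

instance : AddCommGroup (WithBilin B) := inferInstanceAs (AddCommGroup E)

instance : Module ℝ (WithBilin B) := inferInstanceAs (Module ℝ E)

def equiv : WithBilin B ≃ₗ[ℝ] E := LinearEquiv.refl ℝ E

end WithBilin

variable {B : E →L[ℝ] E →L[ℝ] ℝ}

theorem IsCoercive.apply_self_nonneg (hB : IsCoercive B) (x : E) : 0 ≤ B x x := by
  obtain ⟨C, hC, hCB⟩ := hB
  exact le_trans (by positivity) (hCB x)

theorem IsCoercive.eq_zero_of_apply_self_eq_zero (hB : IsCoercive B) {x : E} (hx : B x x = 0) :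
    x = 0 := by
  obtain ⟨C, hC, hCB⟩ := hB
  have h : C * (‖x‖ * ‖x‖) ≤ 0 := by simpa [hx, mul_assoc] using hCB x
  exact norm_eq_zero.mp <| mul_self_eq_zero.mp <|
    le_antisymm (nonpos_of_mul_nonpos_right h hC) (mul_self_nonneg _)

noncomputable abbrev IsCoercive.innerCore (hB : IsCoercive B) :
    InnerProductSpace.Core ℝ (WithBilin B) where
  inner x y :=
    (B (WithBilin.equiv B x) (WithBilin.equiv B y) +
      B (WithBilin.equiv B y) (WithBilin.equiv B x)) / 2
  conj_inner_symm x y := by simp only [starRingEnd_apply, star_trivial]; ring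
  re_inner_nonneg x := by
    simpa using hB.apply_self_nonneg (WithBilin.equiv B x)
  definite x hx := (WithBilin.equiv B).map_eq_zero_iff.mp
    (hB.eq_zero_of_apply_self_eq_zero (by linarith))
  add_left x y z := by simp only [map_add, add_apply]; ring
  smul_left x y r := by
    simp only [map_smul, smul_apply, smul_eq_mul, starRingEnd_apply, star_trivial]; ring

theorem IsCoercive.exists_continuousLinearEquiv_innerProductSpace (hB : IsCoercive B) :
    ∃ (H : Type u) (_ : NormedAddCommGroup H) (_ : InnerProductSpace ℝ H),
      Nonempty (H ≃L[ℝ] E) := by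
  let := hB.innerCore.toNormedAddCommGroup
  let := InnerProductSpace.ofCore hB.innerCore.toCore
  set e := WithBilin.equiv B
  have norm_sq : ∀ y : WithBilin B, ‖y‖ ^ 2 = B (e y) (e y) := fun y => by
    rw [← real_inner_self_eq_norm_sq]
    exact add_self_div_two _
  obtain ⟨C, hC, hCB⟩ := hB
  refine ⟨WithBilin B, _, _,
    ⟨e.toContinuousLinearEquivOfBounds (√C⁻¹) (√‖B‖) (fun y => ?_) (fun x => ?_)⟩⟩
  · rw [← sq_le_sq₀ (norm_nonneg _) (by positivity), mul_pow, Real.sq_sqrt (by positivity),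
      norm_sq, le_inv_mul_iff₀ hC]
    simpa [sq, mul_assoc] using hCB (e y)
  · rw [← sq_le_sq₀ (norm_nonneg _) (by positivity), mul_pow, Real.sq_sqrt (by positivity),
      norm_sq, e.apply_symm_apply]
    calc B x x ≤ ‖B x x‖ := Real.le_norm_self _
      _ ≤ ‖B‖ * ‖x‖ * ‖x‖ := B.le_opNorm₂ x x
      _ = ‖B‖ * ‖x‖ ^ 2 := by ring

theorem IsCoercive.surjective_inclusionInDoubleDual [CompleteSpace E] (hB : IsCoercive B) :
    Function.Surjective (inclusionInDoubleDual ℝ E) := by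
  obtain ⟨H, _, _, ⟨e⟩⟩ := hB.exists_continuousLinearEquiv_innerProductSpace
  have : CompleteSpace H := (completeSpace_congr (e := e.toEquiv) e.isUniformEmbedding).2 ‹_›
  exact e.surjective_inclusionInDoubleDual InnerProductSpace.surjective_inclusionInDoubleDual

end Coercive

theorem stmt17_general [CompleteSpace X] (A : X →L[ℝ] StrongDual ℝ X)
    (δ : ℝ) (hδ : 0 < δ) (hcoer : ∀ x : X, δ * ‖x‖ ^ 2 ≤ A x x) :
    Function.Surjective (inclusionInDoubleDual ℝ X) :=
  IsCoercive.surjective_inclusionInDoubleDual (B := A)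
    ⟨δ, hδ, fun x => by simpa only [mul_assoc, sq] using hcoer x⟩

theorem stmt17 [CompleteSpace X] (A : X →L[ℝ] StrongDual ℝ X)
    (hmono : ∀ x y : X, 0 ≤ (A x - A y) (x - y))
    (hultra : IsUltraMaxMonotone {p : X × StrongDual ℝ X | p.2 = A p.1})
    (δ : ℝ) (hδ : 0 < δ) (hcoer : ∀ x : X, δ * ‖x‖ ^ 2 ≤ A x x) :
    Function.Surjective (inclusionInDoubleDual ℝ X) :=
  stmt17_general A δ hδ hcoer
end
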